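/- Let n ≥ 2 be an integer and δ ∈ (1/2, 1]. Then sup over (H, L) ∈ Λ(n) of λ({H ≥ L + δ}) equals sup over (H, L) ∈ Λ^δ(n) of λ({H ≥ L + δ}), where λ is Lebesgue measure. -/

import Mathlib

open MeasureTheory
open scoped ENNReal

noncomputable section

/-- A right-continuous step function on `[0, ∞)` with finitely many steps. -/
def IsRCStep (f : ℝ → ℝ) : Prop :=
  ∃ (k : ℕ) (t : Fin (k + 1) → ℝ) (c : Fin (k + 1) → ℝ),
    t 0 = 0 ∧ StrictMono t ∧
    (∀ i : Fin k, ∀ x ∈ Set.Ico (t i.castSucc) (t i.succ), f x = c i.castSucc) ∧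
    (∀ x ∈ Set.Ici (t (Fin.last k)), f x = c (Fin.last k))

/-- The class `Λ(k)` of pairs of functions `(H, L) : [0, ∞) → [0, 1]²`. -/
def Lam (k : ℕ) (H L : ℝ → ℝ) : Prop :=
  (∀ x ∈ Set.Ici (0 : ℝ), 0 ≤ L x ∧ L x ≤ 1 / 2 ∧ 1 / 2 ≤ H x ∧ H x ≤ 1) ∧
  IsRCStep H ∧ IsRCStep L ∧
  volume ({x | 1 / 2 < H x} ∩ Set.Ici 0) + volume ({x | L x < 1 / 2} ∩ Set.Ici 0) ≤
    (k : ℝ≥0∞) / 2 ∧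
  ∀ y ∈ Set.Ioc (0 : ℝ) 1,
    ENNReal.ofReal ((1 - y) / y) *
        (volume ({x | H x = y} ∩ Set.Ici 0) + volume ({x | L x = y} ∩ Set.Ici 0)) =
      volume ({x | H x = 1 - y} ∩ Set.Ici 0) + volume ({x | L x = 1 - y} ∩ Set.Ici 0)

/-- The class `Λ^δ(k)`. -/
def LamDelta (δ : ℝ) (k : ℕ) (H L : ℝ → ℝ) : Prop :=
  Lam k H L ∧
  {x ∈ Set.Ici (0 : ℝ) | H x ∈ Set.Ioo (1 / 2) δ} = ∅ ∧
  {x ∈ Set.Ici (0 : ℝ) | L x ∈ Set.Ioo (1 - δ) (1 / 2)} = ∅ ∧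
  {x ∈ Set.Ici (0 : ℝ) | L x + δ ≤ H x} = {x ∈ Set.Ici (0 : ℝ) | L x < 1 / 2}

/-!
Both suprema equal `K n / 2` with `K = (1 - δ) / (2 - δ)` (`optimalRatio δ`).

For the upper bound, condition (4) at `y < 1/2` says that mass of `L` at a level `c` forces
`(1 - c) / c` times as much mass of `H` at level `1 - c`. Weighting a value `c` of `L` by
`min 1 (K / c)` and a value `h` of `H` by `max 0 (1 - K / (h - δ))` gives total weight at least
one on `{H ≥ L + δ}`, while each such pair of masses costs at most `K` times its share of
`λ(H > 1/2) + λ(L < 1/2) ≤ n / 2`: a weak LP duality argument.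

The bound is attained in `Λ^δ(n)` by `L = 1 - δ`, `H = 1` on `[0, M)`, `H = δ` on
`[M, M / (1 - δ))` and both `1 / 2` afterwards, with `M = K n / 2`; when `K n = 0` the constant
pair `1 / 2` does.
-/

section LevelSets

variable {X β : Type*} [MeasurableSpace X] {μ : Measure X} {A : Set X}

lemma exists_finset_of_const_on_cover {ι : Type*} [Finite ι] {f : X → β} (P : ι → Set X)
    (v : ι → β) (hP : ∀ i, MeasurableSet (P i)) (hcover : A ⊆ ⋃ i, P i)
    (hfP : ∀ i, ∀ x ∈ P i, f x = v i) (hA : MeasurableSet A) :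
    ∃ S : Finset β, (∀ x ∈ A, f x ∈ S) ∧ ∀ y, MeasurableSet (f ⁻¹' {y} ∩ A) := by
  classical
  have := Fintype.ofFinite ι
  refine ⟨Finset.univ.image v, fun x hx => ?_, fun y => ?_⟩
  · obtain ⟨i, hi⟩ := Set.mem_iUnion.1 (hcover hx)
    exact hfP i x hi ▸ Finset.mem_image_of_mem v (Finset.mem_univ i)
  · have hlevel : f ⁻¹' {y} ∩ A = (⋃ i, P i ∩ {_x | v i = y}) ∩ A := by
      ext x
      simp only [Set.mem_inter_iff, Set.mem_preimage, Set.mem_singleton_iff, Set.mem_iUnion]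
      constructor
      · rintro ⟨rfl, hx⟩
        obtain ⟨i, hi⟩ := Set.mem_iUnion.1 (hcover hx)
        exact ⟨⟨i, hi, (hfP i x hi).symm⟩, hx⟩
      · rintro ⟨⟨i, hi, rfl⟩, hx⟩
        exact ⟨hfP i x hi, hx⟩
    rw [hlevel]
    exact (MeasurableSet.iUnion fun i => (hP i).inter (MeasurableSet.const _)).inter hA

lemma sum_measure_preimage_singleton_inter_le (f : X → β)
    (hf : ∀ y, MeasurableSet (f ⁻¹' {y} ∩ A)) (T : Finset β) {P : Set β} (hT : ↑T ⊆ P) :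
    ∑ y ∈ T, μ (f ⁻¹' {y} ∩ A) ≤ μ (f ⁻¹' P ∩ A) := by
  rw [← measure_biUnion_finset ((Set.pairwiseDisjoint_fiber f _).mono fun _ =>
    Set.inter_subset_left) fun y _ => hf y]
  exact measure_mono <| Set.iUnion₂_subset fun y hy =>
    Set.inter_subset_inter_left _ (Set.preimage_mono (Set.singleton_subset_iff.2 (hT hy)))

lemma sum_measure_levelSets_lt_half_le {f g : X → ℝ} (hf : ∀ y, MeasurableSet (f ⁻¹' {y} ∩ A))
    (hg : ∀ y, MeasurableSet (g ⁻¹' {y} ∩ A)) {T : Finset ℝ} (hT : ∀ y ∈ T, y < 1 / 2) :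
    ∑ y ∈ T, (μ (f ⁻¹' {y} ∩ A) + μ (g ⁻¹' {1 - y} ∩ A)) ≤
      μ (f ⁻¹' Set.Iio (1 / 2) ∩ A) + μ (g ⁻¹' Set.Ioi (1 / 2) ∩ A) := by
  rw [Finset.sum_add_distrib]
  gcongr
  · exact sum_measure_preimage_singleton_inter_le f hf T hT
  · rw [← Finset.sum_image (f := fun h => μ (g ⁻¹' {h} ∩ A)) (g := (1 - ·))
      fun _ _ _ _ h => by simpa using h]
    refine sum_measure_preimage_singleton_inter_le g hg _ fun h hh => ?_
    obtain ⟨y, hy, rfl⟩ := Finset.mem_image.1 hh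
    show 1 / 2 < 1 - y
    linarith [hT y hy]

lemma measure_le_sum_weighted_levelSets {f g : X → β} {S : Finset β} {E : Set X}
    (hEA : E ⊆ A) (hfS : ∀ x ∈ A, f x ∈ S) (hgS : ∀ x ∈ A, g x ∈ S)
    (hf : ∀ y, MeasurableSet (f ⁻¹' {y} ∩ A)) (hg : ∀ y, MeasurableSet (g ⁻¹' {y} ∩ A))
    (a b : β → ℝ≥0∞) (hab : ∀ x ∈ E, 1 ≤ a (f x) + b (g x)) :
    μ E ≤ ∑ y ∈ S, (a y * μ (f ⁻¹' {y} ∩ A) + b y * μ (g ⁻¹' {y} ∩ A)) := by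
  set F := fun y => f ⁻¹' {y} ∩ A
  set G := fun y => g ⁻¹' {y} ∩ A
  have hcover : E ⊆ ⋃ s ∈ S, ⋃ t ∈ S, E ∩ F s ∩ G t := fun x hx =>
    Set.mem_biUnion (hfS x (hEA hx)) <| Set.mem_biUnion (hgS x (hEA hx))
      ⟨⟨hx, rfl, hEA hx⟩, rfl, hEA hx⟩
  have hpair : ∀ s t, μ (E ∩ F s ∩ G t) ≤ (a s + b t) * μ (F s ∩ G t) := by
    intro s t
    rcases (E ∩ F s ∩ G t).eq_empty_or_nonempty with he | ⟨x, ⟨hxE, hxs, -⟩, hxt, -⟩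
    · simp [he]
    · calc μ (E ∩ F s ∩ G t) ≤ 1 * μ (F s ∩ G t) := by
            rw [one_mul, Set.inter_assoc]; exact measure_mono Set.inter_subset_right
        _ ≤ (a s + b t) * μ (F s ∩ G t) := by
            gcongr; rw [← hxs, ← hxt]; exact hab x hxE
  have hF : ∀ s, ∑ t ∈ S, μ (F s ∩ G t) ≤ μ (F s) := fun s => by
    have hd : (S : Set β).PairwiseDisjoint fun t => F s ∩ G t :=
      (Set.pairwiseDisjoint_fiber g _).mono fun _ =>
        Set.inter_subset_right.trans Set.inter_subset_left
    rw [← measure_biUnion_finset hd fun t _ => (hf s).inter (hg t)]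
    exact measure_mono (Set.iUnion₂_subset fun _ _ => Set.inter_subset_left)
  have hG : ∀ t, ∑ s ∈ S, μ (F s ∩ G t) ≤ μ (G t) := fun t => by
    have hd : (S : Set β).PairwiseDisjoint fun s => F s ∩ G t :=
      (Set.pairwiseDisjoint_fiber f _).mono fun _ =>
        Set.inter_subset_left.trans Set.inter_subset_left
    rw [← measure_biUnion_finset hd fun s _ => (hf s).inter (hg t)]
    exact measure_mono (Set.iUnion₂_subset fun _ _ => Set.inter_subset_right)
  calc μ E ≤ ∑ s ∈ S, ∑ t ∈ S, μ (E ∩ F s ∩ G t) :=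
        (measure_mono hcover).trans <| (measure_biUnion_finset_le _ _).trans <|
          Finset.sum_le_sum fun _ _ => measure_biUnion_finset_le _ _
    _ ≤ ∑ s ∈ S, ∑ t ∈ S, (a s + b t) * μ (F s ∩ G t) := by gcongr with s _ t _; exact hpair s t
    _ = ∑ s ∈ S, a s * ∑ t ∈ S, μ (F s ∩ G t) + ∑ t ∈ S, b t * ∑ s ∈ S, μ (F s ∩ G t) := by
        simp only [add_mul, Finset.sum_add_distrib, Finset.mul_sum]
        rw [Finset.sum_comm (f := fun s t => b t * μ (F s ∩ G t))]
    _ ≤ ∑ y ∈ S, (a y * μ (F y) + b y * μ (G y)) := by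
        rw [Finset.sum_add_distrib]; gcongr with s _ t _
        exacts [hF s, hG t]

end LevelSets

lemma IsRCStep.exists_finset {f : ℝ → ℝ} (hf : IsRCStep f) :
    ∃ S : Finset ℝ, (∀ x ∈ Set.Ici 0, f x ∈ S) ∧ ∀ y, MeasurableSet (f ⁻¹' {y} ∩ Set.Ici 0) := by
  obtain ⟨k, t, c, ht0, hmono, hmid, hlast⟩ := hf
  let P : Option (Fin k) → Set ℝ := fun o =>
    o.elim (Set.Ici (t (Fin.last k))) fun i => Set.Ico (t i.castSucc) (t i.succ)
  let v : Option (Fin k) → ℝ := fun o => o.elim (c (Fin.last k)) fun i => c i.castSucc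
  refine exists_finset_of_const_on_cover P v ?_ ?_ ?_ measurableSet_Ici
  · rintro (_ | i)
    exacts [measurableSet_Ici, measurableSet_Ico]
  · intro x (hx : 0 ≤ x)
    rcases le_or_gt (t (Fin.last k)) x with hxl | hxl
    · exact Set.mem_iUnion.2 ⟨none, hxl⟩
    let s : ℕ → ℝ := fun i => if h : i < k + 1 then t ⟨i, h⟩ else 0
    have hs : ∀ i (h : i < k + 1), s i = t ⟨i, h⟩ := fun i h => dif_pos h
    have hx' : x ∈ Set.Ico (s 0) (s k) := by
      rw [hs 0 k.succ_pos, hs k k.lt_succ_self]; exact ⟨ht0 ▸ hx, hxl⟩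
    obtain ⟨i, hi, hxi⟩ := Set.mem_iUnion₂.1 (Ico_subset_biUnion_Ico k s hx')
    have hi : i < k := Finset.mem_range.1 hi
    rw [hs i (by omega), hs (i + 1) (by omega)] at hxi
    exact Set.mem_iUnion.2 ⟨some ⟨i, hi⟩, hxi⟩
  · rintro (_ | i) x hx
    exacts [hlast x hx, hmid i x hx]

lemma isRCStep_const (u : ℝ) : IsRCStep fun _ => u :=
  ⟨0, ![0], ![u], rfl, Fin.strictMono_iff_lt_succ.2 fun i => i.elim0, fun i => i.elim0,
    fun _ _ => rfl⟩

lemma isRCStep_ite {a : ℝ} (ha : 0 < a) (u v : ℝ) :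
    IsRCStep fun x => if x < a then u else v := by
  refine ⟨1, ![0, a], ![u, v], rfl, Fin.strictMono_iff_lt_succ.2 fun i => ?_,
    fun i x hx => ?_, fun x hx => ?_⟩
  · fin_cases i; simpa using ha
  · fin_cases i; simp_all
  · simp_all [Fin.last]

lemma isRCStep_ite_ite {a b : ℝ} (ha : 0 < a) (hab : a < b) (u v w : ℝ) :
    IsRCStep fun x => if x < a then u else if x < b then v else w := by
  refine ⟨2, ![0, a, b], ![u, v, w], rfl, Fin.strictMono_iff_lt_succ.2 fun i => ?_,
    fun i x hx => ?_, fun x hx => ?_⟩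
  · fin_cases i <;> simpa
  · fin_cases i <;> simp_all
  · have hbx : b ≤ x := by simpa [Fin.last] using hx
    have hax : ¬x < a := not_lt.2 (hab.le.trans hbx)
    simp [Fin.last, hax, not_lt.2 hbx]

def optimalRatio (δ : ℝ) : ℝ := (1 - δ) / (2 - δ)

def weightL (δ c : ℝ) : ℝ := if c < 1 / 2 then min 1 (optimalRatio δ / c) else 0

def weightH (δ h : ℝ) : ℝ := if δ < h then max 0 (1 - optimalRatio δ / (h - δ)) else 0

section Weights

variable {δ : ℝ}

lemma weightH_nonneg (h : ℝ) : 0 ≤ weightH δ h := by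
  unfold weightH; split_ifs
  exacts [le_max_left _ _, le_rfl]

variable (hδ : δ ∈ Set.Ioc (1 / 2 : ℝ) 1)
include hδ

lemma optimalRatio_nonneg : 0 ≤ optimalRatio δ :=
  div_nonneg (by linarith [hδ.2]) (by linarith [hδ.2])

lemma optimalRatio_le_half : optimalRatio δ ≤ 1 / 2 := by
  rw [optimalRatio, div_le_iff₀ (by linarith [hδ.2])]; linarith [hδ.1]

lemma weightL_nonneg {c : ℝ} (hc : 0 ≤ c) : 0 ≤ weightL δ c := by
  unfold weightL; split_ifs
  exacts [le_min zero_le_one (div_nonneg (optimalRatio_nonneg hδ) hc), le_rfl]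

lemma one_le_weightL_add_weightH {c h : ℝ} (hc : 0 < c) (hch : c + δ ≤ h) (h1 : h ≤ 1) :
    1 ≤ weightL δ c + weightH δ h := by
  have hK := optimalRatio_nonneg hδ
  rw [weightL, if_pos (by linarith [hδ.1]), weightH, if_pos (by linarith)]
  have : optimalRatio δ / (h - δ) ≤ optimalRatio δ / c :=
    div_le_div_of_nonneg_left hK hc (by linarith)
  rcases min_cases 1 (optimalRatio δ / c) with ⟨hmin, -⟩ | ⟨hmin, -⟩ <;> rw [hmin]
  · linarith [le_max_left 0 (1 - optimalRatio δ / (h - δ))]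
  · linarith [le_max_right 0 (1 - optimalRatio δ / (h - δ))]

lemma mul_weightL_add_mul_weightH_le {c : ℝ} (hc : 0 ≤ c) (hc2 : c < 1 / 2) :
    c * weightL δ c + (1 - c) * weightH δ (1 - c) ≤ optimalRatio δ := by
  set K := optimalRatio δ
  have hK := optimalRatio_nonneg hδ
  have hKδ : K * (2 - δ) = 1 - δ := div_mul_cancel₀ _ (by linarith [hδ.2])
  have hwL : c * weightL δ c ≤ K := by
    rw [weightL, if_pos hc2]
    rcases hc.eq_or_lt with rfl | hc
    · simpa using hK
    · exact (mul_le_mul_of_nonneg_left (min_le_right _ _) hc.le).trans_eq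
        (mul_div_cancel₀ _ hc.ne')
  by_cases hu : δ < 1 - c ∧ K < 1 - c - δ
  · have hu0 : 0 < 1 - c - δ := hK.trans_lt hu.2
    have hwH : weightH δ (1 - c) = 1 - K / (1 - c - δ) := by
      rw [weightH, if_pos hu.1, max_eq_right]
      rw [sub_nonneg, div_le_one hu0]; exact hu.2.le
    have hwL1 : c * weightL δ c ≤ c := by
      rw [weightL, if_pos hc2]; exact mul_le_of_le_one_right hc (min_le_left _ _)
    rw [hwH]
    have key : (1 - c) * (1 - K / (1 - c - δ)) * (1 - c - δ) ≤ (K - c) * (1 - c - δ) := by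
      rw [mul_assoc, sub_mul 1 (K / _), div_mul_cancel₀ _ hu0.ne', one_mul]
      nlinarith [mul_nonneg hc (sub_nonneg.2 (optimalRatio_le_half hδ))]
    linarith [le_of_mul_le_mul_right key hu0]
  · have hwH : weightH δ (1 - c) = 0 := by
      rw [weightH]; split_ifs with h
      · rw [max_eq_left]
        have : 0 < 1 - c - δ := by linarith
        rw [sub_nonpos, le_div_iff₀ this]; linarith [not_and.1 hu h]
      · rfl
    rw [hwH, mul_zero, add_zero]; exact hwL

end Weights

lemma exists_finset_reflect_closed (S₀ : Finset ℝ) :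
    ∃ S : Finset ℝ, (∀ y ∈ S₀, y ∈ Set.Icc (0 : ℝ) 1 → y ∈ S) ∧
      ∀ y ∈ S, 1 - y ∈ S ∧ 0 ≤ y := by
  refine ⟨(S₀ ∪ S₀.image (1 - ·)).filter (· ∈ Set.Icc (0 : ℝ) 1),
    fun y hy hy01 => by simpa [hy] using hy01, fun y hy => ?_⟩
  simp only [Finset.mem_filter, Finset.mem_union, Finset.mem_image, Set.mem_Icc] at hy ⊢
  obtain ⟨hy | ⟨z, hz, rfl⟩, hy0, hy1⟩ := hy
  · exact ⟨⟨Or.inr ⟨y, hy, rfl⟩, by linarith, by linarith⟩, hy0⟩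
  · exact ⟨⟨Or.inl (by rwa [sub_sub_cancel]), by linarith, by linarith⟩, hy0⟩

lemma Finset.sum_comp_one_sub {M : Type*} [AddCommMonoid M] {S : Finset ℝ}
    (hS : ∀ y ∈ S, 1 - y ∈ S) (φ : ℝ → M) : ∑ y ∈ S, φ (1 - y) = ∑ y ∈ S, φ y :=
  Finset.sum_nbij' (1 - ·) (1 - ·) hS hS (by simp) (by simp) fun _ _ => rfl

lemma Lam.volume_preimage_L_zero {n : ℕ} {H L : ℝ → ℝ} (hHL : Lam n H L) :
    volume (L ⁻¹' {0} ∩ Set.Ici 0) = 0 := by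
  have h1 := hHL.2.2.2.2 1 ⟨one_pos, le_rfl⟩
  rw [sub_self, zero_div, ENNReal.ofReal_zero, zero_mul] at h1
  exact (add_eq_zero.1 h1.symm).2

lemma Lam.balance_of_lt_half {n : ℕ} {H L : ℝ → ℝ} (hHL : Lam n H L) {y : ℝ} (hy0 : 0 < y)
    (hy : y < 1 / 2) :
    ENNReal.ofReal ((1 - y) / y) * volume (L ⁻¹' {y} ∩ Set.Ici 0) =
      volume (H ⁻¹' {1 - y} ∩ Set.Ici 0) := by
  obtain ⟨hbd, -, -, -, hbal⟩ := hHL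
  have hnull : ∀ (f : ℝ → ℝ) y, (∀ x ∈ Set.Ici (0 : ℝ), f x ≠ y) →
      volume (f ⁻¹' {y} ∩ Set.Ici 0) = 0 := fun f y h =>
    measure_mono_null (fun x hx => (h x hx.2 hx.1).elim) measure_empty
  have h := hbal y ⟨hy0, by linarith⟩
  change ENNReal.ofReal _ * (volume (H ⁻¹' {y} ∩ _) + _) = _ + volume (L ⁻¹' {1 - y} ∩ _) at h
  rwa [hnull H y (fun x hx => by linarith [hbd x hx]), zero_add,
    hnull L (1 - y) (fun x hx => by linarith [hbd x hx]), add_zero] at h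

section UpperBound

variable {δ : ℝ} (hδ : δ ∈ Set.Ioc (1 / 2 : ℝ) 1)
include hδ

lemma ofReal_weightL_mul_add_ofReal_weightH_mul_le {y : ℝ} (hy : 0 ≤ y) {a b : ℝ≥0∞}
    (hab : 0 < y → y < 1 / 2 → ENNReal.ofReal ((1 - y) / y) * a = b) :
    ENNReal.ofReal (weightL δ y) * a + ENNReal.ofReal (weightH δ (1 - y)) * b ≤
      ENNReal.ofReal (optimalRatio δ) * if y < 1 / 2 then a + b else 0 := by
  have hK := optimalRatio_nonneg hδ
  split_ifs with hy2
  · rcases hy.eq_or_lt with rfl | hy0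
    · have hH1 : weightH δ 1 ≤ optimalRatio δ := by
        simpa using mul_weightL_add_mul_weightH_le hδ le_rfl (by norm_num)
      have hL0 : weightL δ 0 = 0 := by simp [weightL]
      rw [hL0, ENNReal.ofReal_zero, zero_mul, zero_add, sub_zero]
      gcongr
      exact le_add_self
    · rw [← hab hy0 hy2]
      set r := (1 - y) / y
      have hr : 0 ≤ r := div_nonneg (by linarith) hy
      have key : weightL δ y + weightH δ (1 - y) * r ≤ optimalRatio δ * (1 + r) := by
        have e1 : y * (weightL δ y + weightH δ (1 - y) * r) =
            y * weightL δ y + (1 - y) * weightH δ (1 - y) := by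
          simp only [r]; field_simp
        have e2 : y * (optimalRatio δ * (1 + r)) = optimalRatio δ := by
          simp only [r]; field_simp; ring
        refine le_of_mul_le_mul_left ?_ hy0
        rw [e1, e2]
        exact mul_weightL_add_mul_weightH_le hδ hy hy2
      calc ENNReal.ofReal (weightL δ y) * a + ENNReal.ofReal (weightH δ (1 - y)) *
            (ENNReal.ofReal r * a)
          = ENNReal.ofReal (weightL δ y + weightH δ (1 - y) * r) * a := by
            rw [ENNReal.ofReal_add (weightL_nonneg hδ hy)
              (mul_nonneg (weightH_nonneg _) hr), ENNReal.ofReal_mul (weightH_nonneg _)]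
            ring
        _ ≤ ENNReal.ofReal (optimalRatio δ * (1 + r)) * a := by gcongr
        _ = ENNReal.ofReal (optimalRatio δ) * (a + ENNReal.ofReal r * a) := by
            rw [ENNReal.ofReal_mul hK, ENNReal.ofReal_add zero_le_one hr, ENNReal.ofReal_one]
            ring
  · have hL : weightL δ y = 0 := if_neg hy2
    have hH : weightH δ (1 - y) = 0 := if_neg (by linarith [hδ.1])
    simp [hL, hH]

lemma Lam.volume_le_sum_weightL_add_weightH {n : ℕ} {H L : ℝ → ℝ} (hHL : Lam n H L)
    {S : Finset ℝ} (hHS : ∀ x ∈ Set.Ici 0, H x ∈ S) (hLS : ∀ x ∈ Set.Ici 0, L x ∈ S)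
    (hHm : ∀ y, MeasurableSet (H ⁻¹' {y} ∩ Set.Ici 0))
    (hLm : ∀ y, MeasurableSet (L ⁻¹' {y} ∩ Set.Ici 0)) :
    volume ({x | L x + δ ≤ H x} ∩ Set.Ici 0) ≤
      ∑ y ∈ S, (ENNReal.ofReal (weightL δ y) * volume (L ⁻¹' {y} ∩ Set.Ici 0) +
        ENNReal.ofReal (weightH δ y) * volume (H ⁻¹' {y} ∩ Set.Ici 0)) := by
  -- the weights do not cover the points where `L = 0`, a null set by condition (4) at `y = 1`
  rw [← measure_sdiff_null hHL.volume_preimage_L_zero]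
  refine measure_le_sum_weighted_levelSets (Set.sdiff_subset.trans Set.inter_subset_right)
    hLS hHS hLm hHm _ _ ?_
  rintro x ⟨⟨hx, hx0⟩, hxZ⟩
  have hbd := hHL.1 x hx0
  have hLx : 0 < L x := lt_of_le_of_ne hbd.1 fun h => hxZ ⟨h.symm, hx0⟩
  rw [← ENNReal.ofReal_one, ← ENNReal.ofReal_add (weightL_nonneg hδ hLx.le) (weightH_nonneg _)]
  exact ENNReal.ofReal_le_ofReal (one_le_weightL_add_weightH hδ hLx hx hbd.2.2.2)

lemma Lam.volume_le {n : ℕ} {H L : ℝ → ℝ} (hHL : Lam n H L) :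
    volume ({x | L x + δ ≤ H x} ∩ Set.Ici 0) ≤ ENNReal.ofReal (optimalRatio δ * n / 2) := by
  have ⟨hbd, hH, hL, hmass, _⟩ := hHL
  obtain ⟨SH, hSH, hHm⟩ := hH.exists_finset
  obtain ⟨SL, hSL, hLm⟩ := hL.exists_finset
  obtain ⟨S, hS₀, hS⟩ := exists_finset_reflect_closed (SH ∪ SL)
  have hHS : ∀ x ∈ Set.Ici 0, H x ∈ S := fun x hx => hS₀ _ (Finset.mem_union_left _ (hSH x hx))
    ⟨by linarith [hbd x hx], (hbd x hx).2.2.2⟩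
  have hLS : ∀ x ∈ Set.Ici 0, L x ∈ S := fun x hx => hS₀ _ (Finset.mem_union_right _ (hSL x hx))
    ⟨(hbd x hx).1, by linarith [hbd x hx]⟩
  set mH : ℝ → ℝ≥0∞ := fun y => volume (H ⁻¹' {y} ∩ Set.Ici 0)
  set mL : ℝ → ℝ≥0∞ := fun y => volume (L ⁻¹' {y} ∩ Set.Ici 0)
  calc volume ({x | L x + δ ≤ H x} ∩ Set.Ici 0)
      ≤ ∑ y ∈ S, (ENNReal.ofReal (weightL δ y) * mL y + ENNReal.ofReal (weightH δ y) * mH y) :=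
        hHL.volume_le_sum_weightL_add_weightH hδ hHS hLS hHm hLm
    _ = ∑ y ∈ S, (ENNReal.ofReal (weightL δ y) * mL y +
          ENNReal.ofReal (weightH δ (1 - y)) * mH (1 - y)) := by
        rw [Finset.sum_add_distrib, Finset.sum_add_distrib,
          Finset.sum_comp_one_sub (fun y hy => (hS y hy).1)
            fun y => ENNReal.ofReal (weightH δ y) * mH y]
    _ ≤ ∑ y ∈ S, ENNReal.ofReal (optimalRatio δ) *
          if y < 1 / 2 then mL y + mH (1 - y) else 0 :=
        Finset.sum_le_sum fun y hy => ofReal_weightL_mul_add_ofReal_weightH_mul_le hδ (hS y hy).2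
          fun hy0 hy2 => hHL.balance_of_lt_half hy0 hy2
    _ = ENNReal.ofReal (optimalRatio δ) * ∑ y ∈ S.filter (· < 1 / 2), (mL y + mH (1 - y)) := by
        rw [← Finset.mul_sum, ← Finset.sum_filter]
    _ ≤ ENNReal.ofReal (optimalRatio δ) * (n / 2) := by
        gcongr
        refine (sum_measure_levelSets_lt_half_le hLm hHm
          fun y hy => (Finset.mem_filter.1 hy).2).trans ?_
        rw [add_comm]
        exact hmass
    _ = ENNReal.ofReal (optimalRatio δ * n / 2) := by
        rw [mul_div_assoc, ENNReal.ofReal_mul (optimalRatio_nonneg hδ),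
          ENNReal.ofReal_div_of_pos two_pos, ENNReal.ofReal_natCast, ENNReal.ofReal_ofNat]

end UpperBound

section IntervalMasses

variable {β : Type*}

lemma volume_preimage_ite_inter_Ici {a b : ℝ} (hab : a ≤ b) (u : β) (g : ℝ → β) (s : Set β) :
    volume ((fun x => if x < b then u else g x) ⁻¹' s ∩ Set.Ici a) =
      s.indicator (fun _ => ENNReal.ofReal (b - a)) u + volume (g ⁻¹' s ∩ Set.Ici b) := by
  have hdisj : Disjoint (Set.Ico a b) (g ⁻¹' s ∩ Set.Ici b) :=
    Set.disjoint_left.2 fun x hx hx' => not_le.2 hx.2 hx'.2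
  by_cases hu : u ∈ s
  · have hset : (fun x => if x < b then u else g x) ⁻¹' s ∩ Set.Ici a =
        Set.Ico a b ∪ (g ⁻¹' s ∩ Set.Ici b) := by
      ext x
      rcases lt_or_ge x b with hx | hx
      · simp [hx, hu]
      · simp [not_lt.2 hx, hx, hab.trans hx]
    rw [hset, measure_union' hdisj measurableSet_Ico, Real.volume_Ico,
      Set.indicator_of_mem hu]
  · have hset : (fun x => if x < b then u else g x) ⁻¹' s ∩ Set.Ici a =
        g ⁻¹' s ∩ Set.Ici b := by
      ext x
      rcases lt_or_ge x b with hx | hx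
      · simp [hx, hu]
      · simp [not_lt.2 hx, hx, hab.trans hx]
    rw [hset, Set.indicator_of_notMem hu, zero_add]

lemma volume_preimage_const_inter_Ici (u : β) (s : Set β) (b : ℝ) :
    volume ((fun _ : ℝ => u) ⁻¹' s ∩ Set.Ici b) = s.indicator (fun _ => ∞) u := by
  by_cases hu : u ∈ s <;> simp [hu]

end IntervalMasses

-- `H = δ` on `[M, M / (1 - δ))` is the mass that condition (4) at `y = 1 - δ` demands.
def extremalH (δ M : ℝ) : ℝ → ℝ :=
  fun x => if x < M then 1 else if x < M / (1 - δ) then δ else 1 / 2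

def extremalL (δ M : ℝ) : ℝ → ℝ := fun x => if x < M then 1 - δ else 1 / 2

section Extremal

variable {δ M : ℝ}

lemma volume_extremalL_preimage (hM : 0 ≤ M) (s : Set ℝ) :
    volume (extremalL δ M ⁻¹' s ∩ Set.Ici 0) =
      s.indicator (fun _ => ENNReal.ofReal M) (1 - δ) + s.indicator (fun _ => ∞) (1 / 2) := by
  unfold extremalL
  rw [volume_preimage_ite_inter_Ici hM, volume_preimage_const_inter_Ici, sub_zero]

variable (hδ : δ ∈ Set.Ioo (1 / 2 : ℝ) 1)
include hδ

lemma volume_extremalH_preimage (hM : 0 ≤ M) (s : Set ℝ) :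
    volume (extremalH δ M ⁻¹' s ∩ Set.Ici 0) =
      s.indicator (fun _ => ENNReal.ofReal M) 1 +
        (s.indicator (fun _ => ENNReal.ofReal (M / (1 - δ) - M)) δ +
          s.indicator (fun _ => ∞) (1 / 2)) := by
  unfold extremalH
  rw [volume_preimage_ite_inter_Ici hM, volume_preimage_ite_inter_Ici
    (le_div_self hM (by linarith [hδ.2]) (by linarith [hδ.1])),
    volume_preimage_const_inter_Ici, sub_zero]

lemma extremal_balance (hM : 0 ≤ M) {y : ℝ} (hy : y ∈ Set.Ioc (0 : ℝ) 1) :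
    ENNReal.ofReal ((1 - y) / y) *
        (volume ({x | extremalH δ M x = y} ∩ Set.Ici 0) +
          volume ({x | extremalL δ M x = y} ∩ Set.Ici 0)) =
      volume ({x | extremalH δ M x = 1 - y} ∩ Set.Ici 0) +
        volume ({x | extremalL δ M x = 1 - y} ∩ Set.Ici 0) := by
  change ENNReal.ofReal _ * (volume (extremalH δ M ⁻¹' {y} ∩ _) +
      volume (extremalL δ M ⁻¹' {y} ∩ _)) =
    volume (extremalH δ M ⁻¹' {1 - y} ∩ _) + volume (extremalL δ M ⁻¹' {1 - y} ∩ _)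
  simp only [volume_extremalH_preimage hδ hM, volume_extremalL_preimage hM,
    Set.indicator_apply, Set.mem_singleton_iff]
  have ⟨hδ1, hδ2⟩ := hδ
  obtain ⟨hy0, -⟩ := hy
  have hδ0 : δ ≠ 0 := by linarith
  have hδ1' : 1 - δ ≠ 0 := by linarith
  have h1δ : (1 : ℝ) ≠ δ := by linarith
  have h1δ' : (1 : ℝ) ≠ 1 - δ := by linarith
  have hδδ' : δ ≠ 1 - δ := by linarith
  have h2δ : (2⁻¹ : ℝ) ≠ δ := by linarith
  have h2δ' : (2⁻¹ : ℝ) ≠ 1 - δ := by linarith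
  have hmass : M / (1 - δ) - M = δ / (1 - δ) * M := by field_simp; ring
  have hbal : ENNReal.ofReal ((1 - δ) / δ) * ENNReal.ofReal (δ / (1 - δ) * M) =
      ENNReal.ofReal M := by
    rw [← ENNReal.ofReal_mul (div_nonneg (by linarith) (by linarith))]
    congr 1
    field_simp
  rcases eq_or_ne y 1 with rfl | hy1'
  · simp [hδ0, hδ1']
  by_cases hyδ : y = δ
  · simpa [hyδ, h1δ, h1δ', hδδ', h2δ, h2δ', hδδ'.symm, hmass] using hbal
  by_cases hy2 : y = 1 / 2
  · subst hy2
    norm_num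
  by_cases hyδ' : y = 1 - δ
  · simp [hyδ', h1δ, h1δ', hδδ', h2δ, h2δ', hδδ'.symm, hmass]
    exact (ENNReal.ofReal_mul (div_nonneg (by linarith) (by linarith))).symm
  · have h1 : (1 : ℝ) ≠ 1 - y := by intro h; linarith
    have h2 : δ ≠ 1 - y := by intro h; apply hyδ'; linarith
    have h3 : (2⁻¹ : ℝ) ≠ 1 - y := by intro h; apply hy2; linarith
    have h4 : 1 - δ ≠ 1 - y := by intro h; apply hyδ; linarith
    have h5 : (2⁻¹ : ℝ) ≠ y := by intro h; apply hy2; linarith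
    simp [Ne.symm hy1', Ne.symm hyδ, Ne.symm hyδ', h1, h2, h3, h4, h5]

lemma lam_extremal {n : ℕ} (hM : 0 < M) (hn : M / (1 - δ) + M ≤ n / 2) :
    Lam n (extremalH δ M) (extremalL δ M) := by
  have ⟨hδ1, hδ2⟩ := hδ
  have hMb : M < M / (1 - δ) := by rw [lt_div_iff₀ (by linarith)]; nlinarith
  refine ⟨fun x _ => ?_, isRCStep_ite_ite hM hMb _ _ _, isRCStep_ite hM _ _, ?_,
    fun y hy => extremal_balance hδ hM.le hy⟩
  · unfold extremalH extremalL
    split_ifs <;> refine ⟨?_, ?_, ?_, ?_⟩ <;> linarith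
  · change volume (extremalH δ M ⁻¹' Set.Ioi (1 / 2) ∩ Set.Ici 0) +
      volume (extremalL δ M ⁻¹' Set.Iio (1 / 2) ∩ Set.Ici 0) ≤ _
    calc _ = ENNReal.ofReal (M / (1 - δ) + M) := by
          rw [volume_extremalH_preimage hδ hM.le, volume_extremalL_preimage hM.le,
            Set.indicator_of_mem (by norm_num : (1 : ℝ) ∈ Set.Ioi (1 / 2)),
            Set.indicator_of_mem (Set.mem_Ioi.2 hδ1),
            Set.indicator_of_notMem (by simp : (1 / 2 : ℝ) ∉ Set.Ioi (1 / 2)),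
            Set.indicator_of_mem (by simp; linarith : 1 - δ ∈ Set.Iio (1 / 2 : ℝ)),
            Set.indicator_of_notMem (by simp : (1 / 2 : ℝ) ∉ Set.Iio (1 / 2)), add_zero, add_zero,
            ← ENNReal.ofReal_add hM.le (sub_nonneg.2 hMb.le), add_sub_cancel,
            ← ENNReal.ofReal_add (hM.trans hMb).le hM.le]
      _ ≤ ENNReal.ofReal (n / 2) := ENNReal.ofReal_le_ofReal hn
      _ = n / 2 := by
          rw [ENNReal.ofReal_div_of_pos two_pos, ENNReal.ofReal_natCast, ENNReal.ofReal_ofNat]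

lemma sep_extremal_add_le_eq :
    {x ∈ Set.Ici (0 : ℝ) | extremalL δ M x + δ ≤ extremalH δ M x} =
      {x ∈ Set.Ici (0 : ℝ) | extremalL δ M x < 1 / 2} := by
  ext x
  simp only [Set.mem_ofPred_eq, extremalH, extremalL, and_congr_right_iff]
  intro _
  obtain ⟨hδ1, hδ2⟩ := hδ
  split_ifs <;> constructor <;> intro h <;> linarith

lemma exists_lamDelta_volume_eq {n : ℕ} (hM : 0 < M) (hn : M / (1 - δ) + M ≤ n / 2) :
    ∃ H L : ℝ → ℝ, LamDelta δ n H L ∧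
      volume ({x | L x + δ ≤ H x} ∩ Set.Ici 0) = ENNReal.ofReal M := by
  have hE := sep_extremal_add_le_eq (M := M) hδ
  refine ⟨extremalH δ M, extremalL δ M, ⟨lam_extremal hδ hM hn, ?_, ?_, hE⟩, ?_⟩
  · ext x
    simp only [Set.mem_ofPred_eq, Set.mem_Ioo, extremalH, Set.mem_empty_iff_false, iff_false]
    split_ifs <;> intro h <;> linarith [h.2.1, h.2.2, hδ.1, hδ.2]
  · ext x
    simp only [Set.mem_ofPred_eq, Set.mem_Ioo, extremalL, Set.mem_empty_iff_false, iff_false]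
    split_ifs <;> intro h <;> linarith [h.2.1, h.2.2, hδ.1, hδ.2]
  · have hE' : {x | extremalL δ M x + δ ≤ extremalH δ M x} ∩ Set.Ici 0 =
        extremalL δ M ⁻¹' Set.Iio (1 / 2) ∩ Set.Ici 0 := by
      ext x
      have := Set.ext_iff.1 hE x
      simp only [Set.mem_ofPred_eq] at this
      simp only [Set.mem_inter_iff, Set.mem_preimage, Set.mem_Iio, Set.mem_ofPred_eq]
      tauto
    rw [hE', volume_extremalL_preimage hM.le, Set.indicator_of_mem (by simp; linarith [hδ.1]),
      Set.indicator_of_notMem (by simp), add_zero]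

end Extremal

lemma lamDelta_const {δ : ℝ} (hδ : 1 / 2 < δ) (n : ℕ) :
    LamDelta δ n (fun _ => 1 / 2) (fun _ => 1 / 2) := by
  refine ⟨⟨fun _ _ => by norm_num, isRCStep_const _, isRCStep_const _, ?_, fun y _ => ?_⟩,
    ?_, ?_, ?_⟩
  · simp
  · by_cases hy : y = 1 / 2
    · subst hy; norm_num
    · have hy₁ : (2⁻¹ : ℝ) ≠ y := fun h => hy (by linarith)
      have hy₂ : (2⁻¹ : ℝ) ≠ 1 - y := fun h => hy (by linarith)
      simp [hy₁, hy₂]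
  · ext x; simp
  · ext x; simp
  · ext x; simp; intro; linarith

lemma exists_lamDelta_le_toReal {δ : ℝ} (hδ : δ ∈ Set.Ioc (1 / 2 : ℝ) 1) (n : ℕ) :
    ∃ H L : ℝ → ℝ, LamDelta δ n H L ∧
      optimalRatio δ * n / 2 ≤ (volume ({x | L x + δ ≤ H x} ∩ Set.Ici 0)).toReal := by
  rcases le_or_gt (optimalRatio δ * n / 2) 0 with hM | hM
  · exact ⟨_, _, lamDelta_const hδ.1 n, hM.trans ENNReal.toReal_nonneg⟩
  have hδ1 : δ < 1 := lt_of_le_of_ne hδ.2 (by rintro rfl; simp [optimalRatio] at hM)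
  have hsum : optimalRatio δ * n / 2 / (1 - δ) + optimalRatio δ * n / 2 = n / 2 := by
    rw [optimalRatio]
    field_simp [(by linarith : (2 : ℝ) - δ ≠ 0), (by linarith : (1 : ℝ) - δ ≠ 0)]
    ring
  obtain ⟨H, L, hHL, hvol⟩ := exists_lamDelta_volume_eq ⟨hδ.1, hδ1⟩ hM hsum.le
  exact ⟨H, L, hHL, by rw [hvol, ENNReal.toReal_ofReal hM.le]⟩

theorem sup_Lam_eq_sup_LamDelta_general (n : ℕ) (δ : ℝ)
    (hδ : δ ∈ Set.Ioc (1 / 2 : ℝ) 1) :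
    sSup {p : ℝ | ∃ H L : ℝ → ℝ, Lam n H L ∧
        p = (volume ({x | L x + δ ≤ H x} ∩ Set.Ici 0)).toReal} =
      sSup {p : ℝ | ∃ H L : ℝ → ℝ, LamDelta δ n H L ∧
        p = (volume ({x | L x + δ ≤ H x} ∩ Set.Ici 0)).toReal} := by
  set SB := {p : ℝ | ∃ H L : ℝ → ℝ, Lam n H L ∧
    p = (volume ({x | L x + δ ≤ H x} ∩ Set.Ici 0)).toReal}
  set SD := {p : ℝ | ∃ H L : ℝ → ℝ, LamDelta δ n H L ∧
    p = (volume ({x | L x + δ ≤ H x} ∩ Set.Ici 0)).toReal}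
  have hsub : SD ⊆ SB := fun p ⟨H, L, hHL, hp⟩ => ⟨H, L, hHL.1, hp⟩
  have hub : ∀ p ∈ SB, p ≤ optimalRatio δ * n / 2 := by
    rintro p ⟨H, L, hHL, rfl⟩
    exact ENNReal.toReal_le_of_le_ofReal (by have := optimalRatio_nonneg hδ; positivity)
      (hHL.volume_le hδ)
  obtain ⟨H, L, hHL, hge⟩ := exists_lamDelta_le_toReal hδ n
  have hmem : (volume ({x | L x + δ ≤ H x} ∩ Set.Ici 0)).toReal ∈ SD := ⟨H, L, hHL, rfl⟩
  have hbddD : BddAbove SD := ⟨_, fun p hp => hub p (hsub hp)⟩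
  exact le_antisymm
    (csSup_le ⟨_, hsub hmem⟩ fun p hp => (hub p hp).trans (hge.trans (le_csSup hbddD hmem)))
    (csSup_le_csSup ⟨_, hub⟩ ⟨_, hmem⟩ hsub)

theorem sup_Lam_eq_sup_LamDelta (n : ℕ) (hn : 2 ≤ n) (δ : ℝ)
    (hδ : δ ∈ Set.Ioc (1 / 2 : ℝ) 1) :
    sSup {p : ℝ | ∃ H L : ℝ → ℝ, Lam n H L ∧
        p = (volume ({x | L x + δ ≤ H x} ∩ Set.Ici 0)).toReal} =
      sSup {p : ℝ | ∃ H L : ℝ → ℝ, LamDelta δ n H L ∧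
        p = (volume ({x | L x + δ ≤ H x} ∩ Set.Ici 0)).toReal} :=
  sup_Lam_eq_sup_LamDelta_general n δ hδ
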